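/- Let K be a field with a complete nontrivial non-Archimedean absolute value and let G be a group with identity e. For every a ∈ c₀(G,K) the norm reproducing property holds for the convolution algebra: ‖a‖ = sup over nonzero b ∈ c₀(G,K) of |(b⋆a)(e)| / ‖b‖, where (b⋆a)(e) = ∑_{s∈G} b(s)a(s⁻¹) (this family is summable and satisfies |(b⋆a)(e)| ≤ ‖b‖·‖a‖ for all b). -/
import Mathlib


open ZeroAtInfty

open Filter in
noncomputable def c0Delta {G K : Type*} [TopologicalSpace G] [DiscreteTopology G]
    [DecidableEq G] [NormedField K] (s : G) : C₀(G, K) where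
  toFun := fun t => if t = s then (1 : K) else 0
  continuous_toFun := continuous_of_discreteTopology
  zero_at_infty' := by
    rw [cocompact_eq_cofinite]
    refine Tendsto.congr' ?_ tendsto_const_nhds
    refine Filter.eventually_cofinite.mpr (Set.Finite.subset (Set.finite_singleton s) ?_)
    intro t ht
    simp only [Set.mem_setOf_eq] at ht
    simp only [Set.mem_singleton_iff]
    by_contra h
    simp [h] at ht

lemma c0Delta_norm {G K : Type*} [TopologicalSpace G] [DiscreteTopology G]
    [DecidableEq G] [NontriviallyNormedField K] (s : G) : ‖(c0Delta s : C₀(G, K))‖ = 1 := by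
  apply le_antisymm
  · rw [← ZeroAtInftyContinuousMap.norm_toBCF_eq_norm]
    refine (BoundedContinuousFunction.norm_le zero_le_one).mpr fun t => ?_
    by_cases h : t = s <;> simp [c0Delta, h]
  · have := (c0Delta (K := K) s).toBCF.norm_coe_le_norm s
    simpa [c0Delta, ZeroAtInftyContinuousMap.norm_toBCF_eq_norm] using this

/-- Over a field `K` with a complete nontrivial non-Archimedean absolute
value and a (discrete) group `G`, every `a ∈ c₀(G, K)` satisfies the norm reproducing
property for the convolution algebra: the families `(b s * a s⁻¹)` are summable with
`‖(b ⋆ a)(e)‖ = ‖∑_s b(s) a(s⁻¹)‖ ≤ ‖b‖ * ‖a‖`, and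
`‖a‖ = sup_{b ≠ 0} ‖∑_s b(s) a(s⁻¹)‖ / ‖b‖`. -/
theorem c0_convolution_norm_reproducing {K G : Type*} [NontriviallyNormedField K]
    [CompleteSpace K] [IsUltrametricDist K] [Group G] [TopologicalSpace G]
    [DiscreteTopology G] (a : C₀(G, K)) :
    (∀ b : C₀(G, K), Summable (fun s : G => b s * a s⁻¹)) ∧
    (∀ b : C₀(G, K), ‖∑' s : G, b s * a s⁻¹‖ ≤ ‖b‖ * ‖a‖) ∧
    ‖a‖ = ⨆ b : {b : C₀(G, K) // b ≠ 0},
      ‖∑' s : G, (b : C₀(G, K)) s * a s⁻¹‖ / ‖(b : C₀(G, K))‖ := by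
  classical
  have key : ∀ b : C₀(G, K), ∀ s : G, ‖b s * a s⁻¹‖ ≤ ‖b‖ * ‖a‖ := by
    intro b s
    rw [norm_mul]
    have h1 : ‖b s‖ ≤ ‖b‖ := by
      simpa [ZeroAtInftyContinuousMap.norm_toBCF_eq_norm] using b.toBCF.norm_coe_le_norm s
    have h2 : ‖a s⁻¹‖ ≤ ‖a‖ := by
      simpa [ZeroAtInftyContinuousMap.norm_toBCF_eq_norm] using a.toBCF.norm_coe_le_norm s⁻¹
    exact mul_le_mul h1 h2 (norm_nonneg _) (norm_nonneg _)
  have hsum : ∀ b : C₀(G, K), Summable (fun s : G => b s * a s⁻¹) := by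
    intro b
    apply NonarchimedeanAddGroup.summable_of_tendsto_cofinite_zero
    have hb : Filter.Tendsto (fun s : G => b s) Filter.cofinite (nhds 0) := by
      have := b.zero_at_infty'
      rwa [Filter.cocompact_eq_cofinite] at this
    have hbound : Filter.IsBoundedUnder (· ≤ ·) Filter.cofinite
        ((‖·‖) ∘ fun s : G => a s⁻¹) := by
      refine Filter.isBoundedUnder_of ⟨‖a‖, fun s => ?_⟩
      simpa [ZeroAtInftyContinuousMap.norm_toBCF_eq_norm] using
        a.toBCF.norm_coe_le_norm s⁻¹
    exact hb.zero_mul_isBoundedUnder_le hbound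
  have hle : ∀ b : C₀(G, K), ‖∑' s : G, b s * a s⁻¹‖ ≤ ‖b‖ * ‖a‖ := fun b =>
    IsUltrametricDist.norm_tsum_le_of_forall_le_of_nonneg
      (mul_nonneg (norm_nonneg _) (norm_nonneg _)) (key b)
  refine ⟨hsum, hle, ?_⟩
  -- delta computations
  have hdelta_ne : ∀ s : G, (c0Delta s : C₀(G, K)) ≠ 0 := by
    intro s h
    have : (c0Delta s : C₀(G, K)) s = 0 := by rw [h]; rfl
    simp [c0Delta] at this
  have hdelta_sum : ∀ s : G, (∑' t : G, (c0Delta s : C₀(G, K)) t * a t⁻¹) = a s⁻¹ := by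
    intro s
    rw [tsum_eq_single s]
    · simp [c0Delta]
    · intro t ht
      simp [c0Delta, ht]
  have hnonempty : Nonempty {b : C₀(G, K) // b ≠ 0} := ⟨⟨c0Delta 1, hdelta_ne 1⟩⟩
  have hbdd : BddAbove (Set.range fun b : {b : C₀(G, K) // b ≠ 0} =>
      ‖∑' s : G, (b : C₀(G, K)) s * a s⁻¹‖ / ‖(b : C₀(G, K))‖) := by
    refine ⟨‖a‖, ?_⟩
    rintro x ⟨⟨b, hb⟩, rfl⟩
    have hbpos : 0 < ‖b‖ := norm_pos_iff.mpr hb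
    rw [div_le_iff₀ hbpos]
    calc ‖∑' s : G, b s * a s⁻¹‖ ≤ ‖b‖ * ‖a‖ := hle b
      _ = ‖a‖ * ‖b‖ := mul_comm _ _
  apply le_antisymm
  · rw [← ZeroAtInftyContinuousMap.norm_toBCF_eq_norm]
    have hSnonneg : 0 ≤ ⨆ b : {b : C₀(G, K) // b ≠ 0},
        ‖∑' s : G, (b : C₀(G, K)) s * a s⁻¹‖ / ‖(b : C₀(G, K))‖ := by
      refine le_trans ?_ (le_ciSup hbdd ⟨c0Delta 1, hdelta_ne 1⟩)
      positivity
    refine (BoundedContinuousFunction.norm_le hSnonneg).mpr fun t => ?_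
    have := le_ciSup hbdd ⟨c0Delta t⁻¹, hdelta_ne t⁻¹⟩
    simpa [hdelta_sum, c0Delta_norm] using this
  · refine ciSup_le fun b => ?_
    obtain ⟨b, hb⟩ := b
    have hbpos : 0 < ‖b‖ := norm_pos_iff.mpr hb
    rw [div_le_iff₀ hbpos]
    calc ‖∑' s : G, b s * a s⁻¹‖ ≤ ‖b‖ * ‖a‖ := hle b
      _ = ‖a‖ * ‖b‖ := mul_comm _ _
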